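/- Let Q be a quaternion division algebra over F and P(x) ∈ Q[x] a monic polynomial of degree n. Then P(x) has at most n/2 distinct conjugacy classes of spherical roots. -/

import Mathlib

open Polynomial

/-- `q` is a spherical root of `P`: `q` is non-central (not in `F`) and every conjugate
of `q` is a right root of `P`. -/
def IsSphericalRoot (F : Type*) {Q : Type*} [Field F] [DivisionRing Q] [Algebra F Q]
    (P : Q[X]) (q : Q) : Prop :=
  (¬∃ r : F, q = algebraMap F Q r) ∧ ∀ g : Q, g ≠ 0 → P.eval (g * q * g⁻¹) = 0

/-!
A non-central `q` generates a subfield `F[q]` of `Q` whose degree over `F` divides `[Q : F] = 4`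
and is neither `1` nor `4`, so the minimal polynomial `m_q = X² + bX + c` of `q` is quadratic with
central coefficients. Every root `s ≠ q` of `m_q` satisfies `s (s - q) = (s - q) (-b - q)`, so it
is conjugate to `-b - q`; applied to a conjugate `w q w⁻¹ ≠ q`, this makes all roots of `m_q`
conjugate to `q`. Hence pairwise non-conjugate roots have distinct, so coprime, minimal
polynomials. If every conjugate of `q` is a root of `P`, the remainder of `P` modulo `m_q`
has degree at most one and vanishes at two distinct conjugates of `q`, so `m_q ∣ P`. Central,
pairwise coprime divisors of `P` multiply to a divisor of `P`, whence `2m ≤ deg P`.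
-/

open Module Function

theorem mul_dvd_of_mul_add_mul_eq_one {R : Type*} [Semiring R] {a b u v x : R}
    (hb : ∀ y, Commute b y) (huv : u * a + v * b = 1) (hax : a ∣ x) (hbx : b ∣ x) :
    a * b ∣ x := by
  obtain ⟨s, rfl⟩ := hax
  obtain ⟨t, ht⟩ := hbx
  refine ⟨u * t + v * s, ?_⟩
  have hs : s = b * (u * t + v * s) :=
    calc s = (u * a + v * b) * s := by rw [huv, one_mul]
      _ = u * (b * t) + v * (b * s) := by rw [← ht, add_mul, mul_assoc, mul_assoc]
      _ = b * (u * t + v * s) := by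
        rw [← mul_assoc, ← mul_assoc, ← (hb u).eq, ← (hb v).eq, mul_add, mul_assoc,
          mul_assoc]
  rw [mul_assoc, ← hs]

section DivisionRing

variable {D : Type*} [DivisionRing D]

theorem conj_ne_self_of_mul_ne_mul {q w : D} (h : q * w ≠ w * q) :
    w ≠ 0 ∧ w * q * w⁻¹ ≠ q := by
  have hw : w ≠ 0 := by rintro rfl; simp at h
  refine ⟨hw, fun h' => h ?_⟩
  calc q * w = w * q * w⁻¹ * w := by rw [h']
    _ = w * q := inv_mul_cancel_right₀ hw _

theorem isConj_of_sq_add_mul_add_eq_zero {b c q s : D} (hbq : Commute b q) (hbs : Commute b s)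
    (hq : q ^ 2 + b * q + c = 0) (hs : s ^ 2 + b * s + c = 0) (hsq : s ≠ q) :
    IsConj (-b - q) s := by
  refine ⟨Units.mk0 (s - q) (sub_ne_zero.2 hsq), sub_eq_zero.1 ?_⟩
  calc (s - q) * (-b - q) - s * (s - q) = (q ^ 2 + q * b + c) - (s ^ 2 + s * b + c) := by
        noncomm_ring
    _ = 0 := by rw [← hbq.eq, ← hbs.eq, hq, hs, sub_zero]

end DivisionRing

namespace Polynomial

section Algebra

variable {R A : Type*} [CommSemiring R] [Semiring A] [Algebra R A]

theorem commute_map_algebraMap (f : R[X]) (S : A[X]) : Commute (f.map (algebraMap R A)) S := by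
  induction f using Polynomial.induction_on' with
  | add f g hf hg => rw [Polynomial.map_add]; exact hf.add_left hg
  | monomial n a =>
    rw [map_monomial, ← C_mul_X_pow_eq_monomial, ← algebraMap_apply]
    exact (Algebra.commute_algebraMap_left a S).mul_left (commute_X_pow S n)

theorem eval_mul_map_algebraMap (S : A[X]) (f : R[X]) (x : A) :
    (S * f.map (algebraMap R A)).eval x = S.eval x * aeval x f := by
  rw [← eval_map_algebraMap]
  exact eval₂_mul_noncomm _ x fun k => by
    simpa using Algebra.commute_algebraMap_left (f.coeff k) x

theorem map_prod_dvd_of_coprime {ι : Type*} {f : ι → R[X]} {s : Finset ι}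
    (hs : (s : Set ι).Pairwise (IsCoprime on f)) {P : A[X]}
    (hP : ∀ i ∈ s, (f i).map (algebraMap R A) ∣ P) :
    (∏ i ∈ s, f i).map (algebraMap R A) ∣ P := by
  classical
  induction s using Finset.induction_on with
  | empty => simp
  | insert j s hj ih =>
    obtain ⟨u, v, huv⟩ : IsCoprime (f j) (∏ i ∈ s, f i) :=
      IsCoprime.prod_right fun i hi ↦
        hs (by simp) (by simp [hi]) (ne_of_mem_of_not_mem hi hj).symm
    rw [Finset.prod_insert hj, Polynomial.map_mul]
    refine mul_dvd_of_mul_add_mul_eq_one (commute_map_algebraMap _) (u := u.map (algebraMap R A))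
      (v := v.map (algebraMap R A)) (by simp [← Polynomial.map_mul, ← Polynomial.map_add, huv])
      (hP j (Finset.mem_insert_self j s)) ?_
    exact ih (hs.mono (by simp)) fun i hi ↦ hP i (Finset.mem_insert_of_mem hi)

theorem aeval_eq_of_monic_of_natDegree_eq_two {p : R[X]} (hp : p.Monic) (hp2 : p.natDegree = 2)
    (x : A) : aeval x p = x ^ 2 + algebraMap R A (p.coeff 1) * x + algebraMap R A (p.coeff 0) := by
  conv_lhs => rw [hp.as_sum, hp2]
  simp only [Finset.sum_range_succ, Finset.range_one, Finset.sum_singleton, map_add, map_mul,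
    map_pow, aeval_X, aeval_C, pow_zero, pow_one, mul_one]
  abel

end Algebra

section DivisionRing

variable {D : Type*} [DivisionRing D]

theorem eq_zero_of_natDegree_le_one_of_eval_eq_zero {P : D[X]} (hP : P.natDegree ≤ 1) {x y : D}
    (hxy : x ≠ y) (hx : P.eval x = 0) (hy : P.eval y = 0) : P = 0 := by
  rw [eq_X_add_C_of_natDegree_le_one hP] at hx hy ⊢
  simp only [eval_add, eval_C_mul, eval_C, eval_X] at hx hy
  have h1 : P.coeff 1 = 0 := by
    have : P.coeff 1 * (x - y) = 0 := by rw [mul_sub, ← sub_eq_zero.2 (hx.trans hy.symm)]; abel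
    exact (mul_eq_zero.1 this).resolve_right (sub_ne_zero.2 hxy)
  simp_all

variable {R : Type*} [CommSemiring R] [Algebra R D]

theorem aeval_mul_mul_inv (p : R[X]) {g : D} (hg : g ≠ 0) (q : D) :
    aeval (g * q * g⁻¹) p = g * aeval q p * g⁻¹ := by
  simpa [ConjAct.units_smul_def] using aeval_algHom_apply
    (MulSemiringAction.toAlgEquiv R D (ConjAct.toConjAct (Units.mk0 g hg))) q p

theorem isConj_of_aeval_eq_zero {p : R[X]} (hp : p.Monic) (hp2 : p.natDegree = 2) {q w r : D}
    (hqw : q * w ≠ w * q) (hq : aeval q p = 0) (hr : aeval r p = 0) : IsConj q r := by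
  set b := algebraMap R D (p.coeff 1)
  have hquad (s : D) (hs : aeval s p = 0) : s ^ 2 + b * s + algebraMap R D (p.coeff 0) = 0 :=
    (aeval_eq_of_monic_of_natDegree_eq_two hp hp2 s).symm.trans hs
  have hconj (s : D) (hs : aeval s p = 0) (hsq : s ≠ q) : IsConj (-b - q) s :=
    isConj_of_sq_add_mul_add_eq_zero (Algebra.commute_algebraMap_left _ _)
      (Algebra.commute_algebraMap_left _ _) (hquad q hq) (hquad s hs) hsq
  obtain ⟨hw, hne⟩ := conj_ne_self_of_mul_ne_mul hqw
  have hwq : aeval (w * q * w⁻¹) p = 0 := by rw [aeval_mul_mul_inv p hw, hq, mul_zero, zero_mul]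
  have hbar : IsConj q (-b - q) :=
    (GroupWithZero.isConj_iff₀.2 ⟨w, hw, rfl⟩).trans (hconj _ hwq hne).symm
  rcases eq_or_ne r q with rfl | hrq
  · exact IsConj.refl r
  · exact hbar.trans (hconj r hr hrq)

theorem map_dvd_of_forall_conj_eval_eq_zero {p : R[X]} (hp : p.Monic) (hp2 : p.natDegree = 2)
    {q w : D} (hqw : q * w ≠ w * q) (hq : aeval q p = 0) {P : D[X]}
    (hP : ∀ g : D, g ≠ 0 → P.eval (g * q * g⁻¹) = 0) : p.map (algebraMap R D) ∣ P := by
  set c := p.map (algebraMap R D)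
  have hc : c.Monic := hp.map _
  have hc2 : c.natDegree = 2 := by rw [hp.natDegree_map, hp2]
  have hdeg : (P %ₘ c).natDegree ≤ 1 := by
    have := natDegree_modByMonic_lt P hc (fun h => by simp [h] at hc2)
    omega
  have hroot (g : D) (hg : g ≠ 0) : (P %ₘ c).eval (g * q * g⁻¹) = 0 := by
    have hquot : (c * (P /ₘ c)).eval (g * q * g⁻¹) = 0 := by
      rw [(commute_map_algebraMap p _).eq, eval_mul_map_algebraMap, aeval_mul_mul_inv p hg, hq]
      simp
    calc (P %ₘ c).eval (g * q * g⁻¹) = (P %ₘ c + c * (P /ₘ c)).eval (g * q * g⁻¹) := by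
          rw [eval_add, hquot, add_zero]
      _ = 0 := by rw [modByMonic_add_div, hP g hg]
  obtain ⟨hw, hne⟩ := conj_ne_self_of_mul_ne_mul hqw
  rw [← modByMonic_eq_zero_iff_dvd hc]
  exact eq_zero_of_natDegree_le_one_of_eval_eq_zero hdeg hne (hroot w hw)
    (by simpa using hroot 1 one_ne_zero)

end DivisionRing

end Polynomial

section DivisionAlgebra

variable {F Q : Type*} [Field F] [DivisionRing Q] [Algebra F Q]

theorem natDegree_minpoly_eq_two [FiniteDimensional F Q] (hdim : finrank F Q = 4) {q w : Q}
    (hqw : q * w ≠ w * q) : (minpoly F q).natDegree = 2 := by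
  set K := Algebra.adjoin F {q}
  let := divisionRingOfFiniteDimensional F K
  have hq : q ∈ K := Algebra.self_mem_adjoin_singleton F q
  have hK1 : finrank F K ≠ 1 := by
    rw [ne_eq, Subalgebra.finrank_eq_one_iff]
    intro hK
    obtain ⟨a, rfl⟩ := Algebra.mem_bot.1 (hK ▸ hq)
    exact hqw (Algebra.commutes a w)
  have hK4 : finrank F K ≠ 4 := by
    intro hK
    have htop : K = ⊤ := Algebra.toSubmodule_eq_top.1
      (Submodule.eq_top_of_finrank_eq (K.finrank_toSubmodule.trans (hK.trans hdim.symm)))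
    have hw : w ∈ K := htop ▸ Algebra.mem_top
    exact hqw (congrArg Subtype.val (mul_comm (⟨q, hq⟩ : K) ⟨w, hw⟩))
  have hK2 : finrank F K = 2 := by
    have hdvd : finrank F K ∣ 4 := hdim ▸ finrank_dvd_finrank_right F K Q
    have := Nat.le_of_dvd (by norm_num) hdvd
    interval_cases h : finrank F K <;> simp_all
  have hle : (minpoly F q).natDegree ≤ 2 := by
    have hmin : minpoly F q = minpoly F (⟨q, hq⟩ : K) :=
      minpoly.algHom_eq K.val Subtype.val_injective ⟨q, hq⟩
    exact hmin ▸ hK2 ▸ minpoly.natDegree_le _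
  have hne1 : (minpoly F q).natDegree ≠ 1 := by
    rw [ne_eq, minpoly.natDegree_eq_one_iff]
    rintro ⟨a, rfl⟩
    exact hqw (Algebra.commutes a w)
  have := minpoly.natDegree_pos (Algebra.IsIntegral.isIntegral (R := F) q)
  omega

theorem isCoprime_minpoly_of_not_isConj [Algebra.IsIntegral F Q] {q r w : Q}
    (hq2 : (minpoly F q).natDegree = 2) (hqw : q * w ≠ w * q) (hqr : ¬IsConj q r) :
    IsCoprime (minpoly F q) (minpoly F r) := by
  have hirr (x : Q) : Irreducible (minpoly F x) :=
    minpoly.irreducible (Algebra.IsIntegral.isIntegral x)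
  refine (hirr q).coprime_iff_not_dvd.2 fun hdvd => hqr ?_
  obtain ⟨k, hk⟩ := (hirr q).dvd_symm (hirr r) hdvd
  refine isConj_of_aeval_eq_zero (minpoly.monic (Algebra.IsIntegral.isIntegral q)) hq2 hqw
    (minpoly.aeval F q) ?_
  rw [hk, map_mul, minpoly.aeval, zero_mul]

end DivisionAlgebra

/-- A monic polynomial of degree `n` over a quaternion division algebra has at most `n/2`
distinct conjugacy classes of spherical roots: any family of pairwise non-conjugate
spherical roots `a : Fin m → Q` satisfies `2 * m ≤ n`. -/
theorem stmt14 {F Q : Type*} [Field F] [DivisionRing Q] [Algebra F Q]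
    [FiniteDimensional F Q] (hdim : Module.finrank F Q = 4)
    (hcent : ∀ z : Q, (∀ w : Q, z * w = w * z) → ∃ r : F, z = algebraMap F Q r)
    (P : Q[X]) (hmonic : P.Monic) (m : ℕ) (a : Fin m → Q)
    (hsph : ∀ i, IsSphericalRoot F P (a i))
    (hpair : ∀ i j, i ≠ j → ¬∃ q : Q, q ≠ 0 ∧ a j = q * a i * q⁻¹) :
    2 * m ≤ P.natDegree := by
  have hnoncomm (i : Fin m) : ∃ w, a i * w ≠ w * a i := by
    by_contra! h
    exact (hsph i).1 (hcent _ h)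
  choose w hw using hnoncomm
  have hmon (i : Fin m) : (minpoly F (a i)).Monic :=
    minpoly.monic (Algebra.IsIntegral.isIntegral _)
  have hdeg (i : Fin m) : (minpoly F (a i)).natDegree = 2 := natDegree_minpoly_eq_two hdim (hw i)
  have hdvd (i : Fin m) : (minpoly F (a i)).map (algebraMap F Q) ∣ P :=
    map_dvd_of_forall_conj_eval_eq_zero (hmon i) (hdeg i) (hw i) (minpoly.aeval F _) (hsph i).2
  have hcop : Pairwise (IsCoprime on fun i => minpoly F (a i)) := fun i j hij =>
    isCoprime_minpoly_of_not_isConj (hdeg i) (hw i) fun hconj => hpair i j hij <| by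
      obtain ⟨g, hg, hgij⟩ := GroupWithZero.isConj_iff₀.1 hconj
      exact ⟨g, hg, hgij.symm⟩
  calc 2 * m = ((∏ i, minpoly F (a i)).map (algebraMap F Q)).natDegree := by
        rw [(monic_prod_of_monic _ _ fun i _ => hmon i).natDegree_map,
          natDegree_prod_of_monic _ _ fun i _ => hmon i]
        simp [hdeg, mul_comm]
    _ ≤ P.natDegree := natDegree_le_of_dvd
        (map_prod_dvd_of_coprime (hcop.set_pairwise _) fun i _ => hdvd i) hmonic.ne_zero
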